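/- Let X consist of N i.i.d. uniform samples in [0,1]^D (D ≥ 1), ρ ∈ (0, 1/4), MinPts = ⌈ρN⌉, and β > 1. For any ε < (1/β)·(1/2)·ρ^{1/D} and any δ > 0, there exists N_ε such that for all N > N_ε, with probability at least 1 - δ, X contains no core points, so DBSCAN returns zero clusters. -/

import Mathlib

open MeasureTheory Set

/-- The unit cube in `ℝ^D` (with the Euclidean metric). -/
def unitCube (D : ℕ) : Set (EuclideanSpace ℝ (Fin D)) :=
  {y | ∀ j, y j ∈ Set.Icc (0 : ℝ) 1}

/-- The law of `N` i.i.d. uniform samples in the unit cube `[0,1]^D`. -/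
noncomputable def unifCube (N D : ℕ) : Measure (Fin N → EuclideanSpace ℝ (Fin D)) :=
  Measure.pi fun _ => volume.restrict (unitCube D)

section DBSCAN

variable {M : Type*} [MetricSpace M]

/-- `p` is a core point of dataset `X`: it belongs to `X` and its closed `ε`-ball contains at
least `minPts` points of `X` (including itself). -/
def IsCore (X : Finset M) (ε : ℝ) (minPts : ℕ) (p : M) : Prop :=
  p ∈ X ∧ minPts ≤ {y : M | y ∈ X ∧ dist p y ≤ ε}.ncard

/-- `q` is density-reachable from `p`: there is a chain in `X` from `p` to `q` whose points
(except possibly the last) are core points, with consecutive distances at most `ε`. -/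
def Reach (X : Finset M) (ε : ℝ) (minPts : ℕ) (p q : M) : Prop :=
  ∃ (t : ℕ) (c : Fin (t + 1) → M), c 0 = p ∧ c (Fin.last t) = q ∧ (∀ i, c i ∈ X) ∧
    ∀ i : Fin t, IsCore X ε minPts (c i.castSucc) ∧ dist (c i.castSucc) (c i.succ) ≤ ε

/-- A DBSCAN cluster: the set of all points density-reachable from some core point. -/
def IsCluster (X : Finset M) (ε : ℝ) (minPts : ℕ) (c : Set M) : Prop :=
  ∃ p, IsCore X ε minPts p ∧ c = {q : M | Reach X ε minPts p q}

/-- The number of clusters DBSCAN produces on `X` with parameters `ε`, `minPts`. -/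
noncomputable def numClusters (X : Finset M) (ε : ℝ) (minPts : ℕ) : ℕ :=
  Set.ncard {c : Set M | IsCluster X ε minPts c}

end DBSCAN

/-!
Cover `[0,1]^D` by a grid of axis-parallel cubes of side `ℓ < ρ^(1/D)`, spaced `ℓ - 2ε` apart,
so that every closed `ε`-ball centred in `[0,1]^D` lies in one of them. A cube has volume
`ℓ^D < ρ`, so by Hoeffding's inequality the probability that it receives at least `ρN` of the
`N` samples is at most `exp (-2 (ρ - ℓ^D)² N)`. The number of cubes does not depend on `N`, so
a union bound shows that with probability tending to `1` every ball holds fewer than `⌈ρN⌉`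
samples, i.e. there is no core point and hence no cluster.
-/

open ProbabilityTheory Metric
open scoped Finset
open Classical

section Cubes

variable {ι : Type*}

def cubeAt (a : ι → ℝ) (ℓ : ℝ) : Set (EuclideanSpace ℝ ι) :=
  {y | ∀ j, y j ∈ Icc (a j) (a j + ℓ)}

lemma cubeAt_eq_preimage (a : ι → ℝ) (ℓ : ℝ) :
    cubeAt a ℓ =
      (MeasurableEquiv.toLp 2 (ι → ℝ)).symm ⁻¹' univ.pi fun j => Icc (a j) (a j + ℓ) := by
  ext y
  simp only [cubeAt, mem_ofPred_eq, mem_preimage, mem_pi, mem_univ, true_implies,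
    MeasurableEquiv.coe_toLp_symm]

lemma measurableSet_cubeAt [Countable ι] (a : ι → ℝ) (ℓ : ℝ) :
    MeasurableSet (cubeAt a ℓ) := by
  rw [cubeAt_eq_preimage]
  exact (MeasurableEquiv.measurable _) (MeasurableSet.univ_pi fun _ => measurableSet_Icc)

lemma volume_cubeAt [Fintype ι] (a : ι → ℝ) (ℓ : ℝ) :
    volume (cubeAt a ℓ) = ENNReal.ofReal ℓ ^ Fintype.card ι := by
  rw [cubeAt_eq_preimage,
    (EuclideanSpace.volume_preserving_symm_measurableEquiv_toLp ι).measure_preimage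
      (MeasurableSet.univ_pi fun _ => measurableSet_Icc).nullMeasurableSet, volume_pi_pi]
  simp [Real.volume_Icc]

end Cubes

lemma unitCube_eq_cubeAt (D : ℕ) : unitCube D = cubeAt 0 1 := by
  ext y
  simp [unitCube, cubeAt]

lemma measurableSet_unitCube (D : ℕ) : MeasurableSet (unitCube D) :=
  unitCube_eq_cubeAt D ▸ measurableSet_cubeAt 0 1

instance (D : ℕ) : IsProbabilityMeasure (volume.restrict (unitCube D)) :=
  ⟨by simp [unitCube_eq_cubeAt, volume_cubeAt]⟩

instance (N D : ℕ) : IsProbabilityMeasure (unifCube N D) := by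
  unfold unifCube
  infer_instance

/-- The grid cell `∏ j, [c j * s, (c j + 1) * s]`, thickened by `ε` in every coordinate. -/
def gridCube {D m : ℕ} (s ε : ℝ) (c : Fin D → Fin m) : Set (EuclideanSpace ℝ (Fin D)) :=
  cubeAt (fun j => (c j : ℕ) * s - ε) (s + 2 * ε)

lemma measurableSet_gridCube {D m : ℕ} (s ε : ℝ) (c : Fin D → Fin m) :
    MeasurableSet (gridCube s ε c) :=
  measurableSet_cubeAt _ _

lemma volume_gridCube {D m : ℕ} {s ε : ℝ} (h : 0 ≤ s + 2 * ε) (c : Fin D → Fin m) :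
    volume (gridCube s ε c) = ENNReal.ofReal ((s + 2 * ε) ^ D) := by
  rw [gridCube, volume_cubeAt, Fintype.card_fin, ENNReal.ofReal_pow h]

lemma exists_closedBall_subset_gridCube {D : ℕ} {s : ℝ} (hs : 0 < s) (ε : ℝ)
    {p : EuclideanSpace ℝ (Fin D)} (hp : p ∈ unitCube D) :
    ∃ c : Fin D → Fin (⌈1 / s⌉₊ + 1), closedBall p ε ⊆ gridCube s ε c := by
  have hk : ∀ j, ⌊p j / s⌋₊ < ⌈1 / s⌉₊ + 1 := fun j => Nat.lt_succ_of_le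
    ((Nat.floor_le_floor (div_le_div_of_nonneg_right (hp j).2 hs.le)).trans (Nat.floor_le_ceil _))
  refine ⟨fun j => ⟨⌊p j / s⌋₊, hk j⟩, fun y hy j => ?_⟩
  have hyp : |y j - p j| ≤ ε := (PiLp.dist_apply_le y p j).trans (mem_closedBall.mp hy)
  have hlow : (⌊p j / s⌋₊ : ℝ) * s ≤ p j :=
    (le_div_iff₀ hs).mp (Nat.floor_le (div_nonneg (hp j).1 hs.le))
  have hup : p j < (⌊p j / s⌋₊ : ℝ) * s + s := by
    have := Nat.lt_floor_add_one (p j / s)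
    rw [div_lt_iff₀ hs] at this
    linarith
  constructor <;> linarith [abs_le.mp hyp]

section DBSCAN

variable {M : Type*} [MetricSpace M] {X : Finset M} {ε : ℝ} {minPts : ℕ}

lemma not_isCore_of_closedBall_subset {p : M} {B : Set M} (hB : closedBall p ε ⊆ B)
    (hcard : #{y ∈ X | y ∈ B} < minPts) : ¬ IsCore X ε minPts p := by
  rintro ⟨-, hcore⟩
  have hsub : {y | y ∈ X ∧ dist p y ≤ ε} ⊆ ↑{y ∈ X | y ∈ B} := fun y ⟨hyX, hy⟩ =>
    Finset.mem_filter.mpr ⟨hyX, hB (mem_closedBall'.mpr hy)⟩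
  have := Set.ncard_le_ncard hsub (Finset.finite_toSet _)
  rw [Set.ncard_coe_finset] at this
  omega

lemma numClusters_eq_zero_of_forall_not_isCore (h : ∀ p, ¬ IsCore X ε minPts p) :
    numClusters X ε minPts = 0 := by
  simp [numClusters, IsCluster, h]

end DBSCAN

lemma not_isCore_of_card_gridCube_lt {D N : ℕ} {s ε : ℝ} (hs : 0 < s) {minPts : ℕ}
    {x : Fin N → EuclideanSpace ℝ (Fin D)} (hx : ∀ i, x i ∈ unitCube D)
    (hcount : ∀ c : Fin D → Fin (⌈1 / s⌉₊ + 1), #{i | x i ∈ gridCube s ε c} < minPts)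
    (p : EuclideanSpace ℝ (Fin D)) : ¬ IsCore (Finset.image x Finset.univ) ε minPts p := by
  intro hp
  obtain ⟨i, -, rfl⟩ := Finset.mem_image.mp hp.1
  obtain ⟨c, hc⟩ := exists_closedBall_subset_gridCube hs ε (hx i)
  refine not_isCore_of_closedBall_subset hc (lt_of_le_of_lt ?_ (hcount c)) hp
  rw [Finset.filter_image]
  exact Finset.card_image_le

lemma pi_card_mem_ge_le_exp {E ι : Type*} [MeasurableSpace E] [Fintype ι]
    (μ : Measure E) [IsProbabilityMeasure μ] {C : Set E} (hC : MeasurableSet C)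
    {γ : ℝ} (hγ : 0 ≤ γ) :
    Measure.pi (fun _ : ι => μ) {x | (μ.real C + γ) * Fintype.card ι ≤ #{i | x i ∈ C}}
      ≤ ENNReal.ofReal (Real.exp (-2 * γ ^ 2 * Fintype.card ι)) := by
  set π := Measure.pi fun _ : ι => μ
  set Y : ι → (ι → E) → ℝ := fun i x => C.indicator 1 (x i)
  have hY : ∀ i, Measurable (Y i) := fun i =>
    (measurable_const.indicator hC).comp (measurable_pi_apply i)
  have hmean : ∀ i, π[Y i] = μ.real C := fun i => by
    rw [integral_comp_eval ((measurable_const.indicator hC).aestronglyMeasurable),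
      integral_indicator_one hC]
  have hsubG : ∀ i ∈ (Finset.univ : Finset ι),
      HasSubgaussianMGF (fun x => Y i x - π[Y i]) ((‖(1 : ℝ) - 0‖₊ / 2) ^ 2) π :=
    fun i _ =>
    hasSubgaussianMGF_of_mem_Icc (hY i).aemeasurable (ae_of_all _ fun x =>
      ⟨indicator_nonneg (fun _ _ => zero_le_one) _,
        indicator_le_self' (fun _ _ => zero_le_one) _⟩)
  have hindep : iIndepFun (fun i x => Y i x - π[Y i]) π := by
    simp only [hmean]
    exact iIndepFun_pi (X := fun _ y => C.indicator 1 y - μ.real C)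
      fun _ => ((measurable_const.indicator hC).sub_const _).aemeasurable
  have hoeffding := HasSubgaussianMGF.measure_sum_ge_le_of_iIndepFun hindep hsubG
    (mul_nonneg hγ (Nat.cast_nonneg (Fintype.card ι)))
  have hsum : ∀ x, ∑ i, (Y i x - π[Y i]) = #{i | x i ∈ C} - μ.real C * Fintype.card ι := by
    intro x
    rw [Finset.sum_sub_distrib]
    simp only [hmean, Finset.sum_const, Finset.card_univ, nsmul_eq_mul]
    simp only [Y, Set.indicator_apply, Pi.one_apply, Finset.sum_boole]
    ring
  have hexp :
      -(γ * Fintype.card ι) ^ 2 / (2 * ∑ _i : ι, ((‖(1 : ℝ) - 0‖₊ / 2) ^ 2 : NNReal)) =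
        -2 * γ ^ 2 * Fintype.card ι := by
    simp only [sub_zero, nnnorm_one, Finset.sum_const, Finset.card_univ, nsmul_eq_mul]
    push_cast
    rcases eq_or_ne (Fintype.card ι : ℝ) 0 with hn | hn
    · simp [hn]
    · field_simp
  rw [← ofReal_measureReal, ← hexp]
  refine ENNReal.ofReal_le_ofReal (le_trans (measureReal_mono fun x hx => ?_) hoeffding)
  simp only [mem_ofPred_eq, hsum] at hx ⊢
  linarith

lemma unifCube_exists_not_mem_unitCube (N D : ℕ) :
    unifCube N D {x | ∃ i, x i ∉ unitCube D} = 0 := by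
  rw [ofPred_exists]
  refine measure_iUnion_null fun i => ?_
  change unifCube N D ((fun x => x i) ⁻¹' (unitCube D)ᶜ) = 0
  rw [unifCube, (measurePreserving_eval _ i).measure_preimage
    (measurableSet_unitCube D).compl.nullMeasurableSet,
    Measure.restrict_apply (measurableSet_unitCube D).compl, compl_inter_self, measure_empty]

lemma unifCube_exists_card_ge_le {D N : ℕ} {κ : Type*} [Fintype κ]
    {B : κ → Set (EuclideanSpace ℝ (Fin D))} (hB : ∀ c, MeasurableSet (B c)) {q γ : ℝ}
    (hq0 : 0 ≤ q) (hq : ∀ c, volume (B c) ≤ ENNReal.ofReal q) (hγ : 0 ≤ γ) :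
    unifCube N D {x | ∃ c, (q + γ) * N ≤ #{i | x i ∈ B c}}
      ≤ ENNReal.ofReal (Fintype.card κ * Real.exp (-2 * γ ^ 2 * N)) := by
  rw [ofPred_exists, ENNReal.ofReal_mul (Nat.cast_nonneg _), ENNReal.ofReal_natCast,
    ← nsmul_eq_mul, ← Finset.card_univ, ← Finset.sum_const]
  refine (measure_iUnion_fintype_le _ _).trans (Finset.sum_le_sum fun c _ => ?_)
  have hqc : (volume.restrict (unitCube D)).real (B c) ≤ q :=
    ENNReal.toReal_le_of_le_ofReal hq0 ((Measure.restrict_le_self _).trans (hq c))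
  have hoeffding := pi_card_mem_ge_le_exp (ι := Fin N) (volume.restrict (unitCube D)) (hB c) hγ
  rw [Fintype.card_fin] at hoeffding
  refine (measure_mono fun x (hx : (q + γ) * N ≤ _) => ?_).trans hoeffding
  exact le_trans (by gcongr) hx

lemma exists_pos_add_two_mul_pow_lt {D : ℕ} (hD : D ≠ 0) {ρ ε : ℝ} (hρ : 0 < ρ)
    (hε : 0 ≤ ε) (h : 2 * ε < ρ ^ ((1 : ℝ) / D)) : ∃ s > 0, (s + 2 * ε) ^ D < ρ := by
  refine ⟨(ρ ^ ((1 : ℝ) / D) - 2 * ε) / 2, by linarith, ?_⟩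
  calc _ < (ρ ^ ((1 : ℝ) / D)) ^ D := pow_lt_pow_left₀ (by linarith) (by linarith) hD
    _ = ρ := by rw [one_div, Real.rpow_inv_natCast_pow hρ.le hD]

lemma compl_setOf_noCore_subset {D N : ℕ} {s ε : ℝ} (hs : 0 < s) (r : ℝ) :
    {x : Fin N → EuclideanSpace ℝ (Fin D) |
        (∀ p, ¬ IsCore (Finset.image x Finset.univ) ε ⌈r⌉₊ p) ∧
        numClusters (Finset.image x Finset.univ) ε ⌈r⌉₊ = 0}ᶜ ⊆
      {x | ∃ i, x i ∉ unitCube D} ∪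
        {x | ∃ c : Fin D → Fin (⌈1 / s⌉₊ + 1), r ≤ #{i | x i ∈ gridCube s ε c}} := by
  intro x hx
  by_contra hgood
  simp only [mem_union, mem_ofPred_eq, not_or, not_exists, not_not, not_le] at hgood
  have hnocore := not_isCore_of_card_gridCube_lt hs hgood.1 fun c => Nat.lt_ceil.mpr (hgood.2 c)
  exact hx ⟨hnocore, numClusters_eq_zero_of_forall_not_isCore hnocore⟩

lemma ofReal_one_sub_le_of_measure_compl_le {α : Type*} [MeasurableSpace α] {μ : Measure α}
    [IsProbabilityMeasure μ] {s : Set α} {δ : ℝ} (hδ : 0 ≤ δ)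
    (h : μ sᶜ ≤ ENNReal.ofReal δ) : ENNReal.ofReal (1 - δ) ≤ μ s := by
  rw [ENNReal.ofReal_sub _ hδ, ENNReal.ofReal_one, tsub_le_iff_right]
  calc 1 = μ univ := measure_univ.symm
    _ ≤ μ s + μ sᶜ := measure_univ_le_add_compl s
    _ ≤ μ s + ENNReal.ofReal δ := by gcongr

lemma exists_forall_mul_exp_neg_le (K : ℝ) {γ δ : ℝ} (hγ : γ ≠ 0) (hδ : 0 < δ) :
    ∃ N₀ : ℕ, ∀ N : ℕ, N₀ ≤ N → K * Real.exp (-2 * γ ^ 2 * N) ≤ δ := by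
  have hlim : Filter.Tendsto (fun N : ℕ => K * Real.exp (-2 * γ ^ 2 * N)) Filter.atTop
      (nhds 0) := by
    simpa using (Real.tendsto_exp_atBot.comp (tendsto_natCast_atTop_atTop.const_mul_atTop_of_neg
      (mul_neg_of_neg_of_pos (by norm_num) (by positivity) : -2 * γ ^ 2 < 0))).const_mul K
  exact Filter.eventually_atTop.mp (hlim.eventually (ge_mem_nhds hδ))

/-- Zero-cluster concentration in `[0,1]^D`: for `ρ ∈ (0,1/4)`, `MinPts = ⌈ρN⌉`, `β > 1` and
any `0 < ε < (1/β)·(1/2)·ρ^(1/D)` and `δ > 0`, for all large enough `N`, with probability at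
least `1-δ` the dataset has no core points, so DBSCAN returns zero clusters. -/
theorem dbscan_zero_clusters_whp_cube (D : ℕ) (hD : 1 ≤ D)
    (ρ : ℝ) (hρ : ρ ∈ Set.Ioo (0 : ℝ) (1/4)) (β : ℝ) (hβ : 1 < β)
    (ε : ℝ) (hε0 : 0 < ε) (hε : ε < (1/β) * (1/2) * ρ ^ ((1 : ℝ) / D)) (δ : ℝ) (hδ : 0 < δ) :
    ∃ N₀ : ℕ, ∀ N : ℕ, N₀ < N →
      ENNReal.ofReal (1 - δ) ≤
        unifCube N D {x : Fin N → EuclideanSpace ℝ (Fin D) |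
          (∀ p, ¬ IsCore (Finset.image x Finset.univ) ε ⌈ρ * N⌉₊ p) ∧
          numClusters (Finset.image x Finset.univ) ε ⌈ρ * N⌉₊ = 0} := by
  have h2ε : 2 * ε < ρ ^ ((1 : ℝ) / D) := by
    have hP := Real.rpow_pos_of_pos hρ.1 ((1 : ℝ) / D)
    have hβ' : 1 / β < 1 := (div_lt_one (by linarith)).mpr hβ
    nlinarith
  obtain ⟨s, hs, hside⟩ := exists_pos_add_two_mul_pow_lt (by omega) hρ.1 hε0.le h2ε
  have hγ : 0 < ρ - (s + 2 * ε) ^ D := sub_pos.mpr hside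
  obtain ⟨N₀, hN₀⟩ :=
    exists_forall_mul_exp_neg_le (Fintype.card (Fin D → Fin (⌈1 / s⌉₊ + 1))) hγ.ne' hδ
  refine ⟨N₀, fun N hN => ofReal_one_sub_le_of_measure_compl_le hδ.le ?_⟩
  have hbad := unifCube_exists_card_ge_le (N := N) (κ := Fin D → Fin (⌈1 / s⌉₊ + 1))
    (measurableSet_gridCube s ε) (by positivity)
    (fun c => (volume_gridCube (by positivity) c).le) hγ.le
  rw [add_sub_cancel] at hbad
  refine (measure_mono (compl_setOf_noCore_subset hs _)).trans
    ((measure_union_le _ _).trans ?_)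
  rw [unifCube_exists_not_mem_unitCube, zero_add]
  exact hbad.trans (ENNReal.ofReal_le_ofReal (hN₀ N hN.le))
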